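/- arXiv:1212.0906 — 3 statements merged into one kernel-verified Lean document; each statement's English description precedes it below -/
import Mathlib

section
/- Euler's identity: the third power of the Dedekind eta function equals the unary theta series, i.e., η(τ)³ = Σ_{m ∈ ℤ} (4m+1) q^{(4m+1)²/8}, where q = e^{2πiτ}. Equivalently, as an identity of formal power series in q^{1/8}: q^{3/8} ∏_{n≥1} (1-q^n)³ = Σ_{m ∈ ℤ} (4m+1) q^{(4m+1)²/8}. -/
/-!
Jacobi's triple product in finite form,
`∏_{j<n} (1 - q^(j+1) z) (z - q^j) = ∑_{i ≤ 2n} (-1)^(n+i) [2n choose i]_q q^T(i-n) z^i` with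
`T(k) = k(k+1)/2`, follows coefficientwise from the two q-Pascal rules by induction on `n`.
Differentiating at `z = 1`, where the factor `z - 1` vanishes, gives
`(q;q)_n (q;q)_(n-1) = ∑_i (-1)^(n+i) i [2n choose i]_q q^T(i-n)`.
Modulo `q^(N+1)` every `(q;q)_k` with `k ≥ N` agrees with `(q;q)_∞`; so for `n = 2N + 1`
the left side times `(q;q)_n` is `(q;q)_∞³`, and `[2n choose i]_q (q;q)_n ≡ 1` for every `i`
with `T(i-n) ≤ N`. What survives is `∑_i (-1)^(n+i) i q^T(i-n)`, in which the two indices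
`i - n = 2m` and `i - n = -2m-1` with `T = 2m² + m` combine to `(4m+1) q^(2m²+m)`.
-/

open Finset

def triangular (k : ℤ) : ℕ := (k * (k + 1) / 2).toNat

theorem two_mul_natCast_triangular (k : ℤ) : 2 * (triangular k : ℤ) = k * (k + 1) := by
  have hnonneg : 0 ≤ k * (k + 1) := by rcases le_or_gt 0 k with h | h <;> nlinarith
  obtain ⟨r, hr⟩ := Int.even_mul_succ_self k
  rw [triangular, hr]
  omega

theorem mem_Icc_of_triangular_le {N : ℕ} {k : ℤ} (h : triangular k ≤ N) :
    -(N : ℤ) - 1 ≤ k ∧ k ≤ N := by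
  have hk := two_mul_natCast_triangular k
  have hN : (triangular k : ℤ) ≤ N := by exact_mod_cast h
  constructor <;> nlinarith

theorem natCast_triangular_eq_iff {k m : ℤ} :
    (triangular k : ℤ) = 2 * m ^ 2 + m ↔ k = 2 * m ∨ k = -2 * m - 1 := by
  have hk := two_mul_natCast_triangular k
  constructor
  · intro h
    have hfac : (k - 2 * m) * (k + 2 * m + 1) = 0 := by linear_combination -hk + 2 * h
    rcases mul_eq_zero.mp hfac with h' | h' <;> omega
  · rintro (rfl | rfl) <;> linarith

theorem exists_natCast_triangular_eq (k : ℤ) :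
    ∃ m : ℤ, (triangular k : ℤ) = 2 * m ^ 2 + m := by
  obtain ⟨m, rfl | rfl⟩ := Int.even_or_odd' k
  · exact ⟨m, natCast_triangular_eq_iff.mpr (Or.inl rfl)⟩
  · exact ⟨-m - 1, natCast_triangular_eq_iff.mpr (Or.inr (by ring))⟩

theorem two_mul_sq_add_self_injective : Function.Injective fun m : ℤ => 2 * m ^ 2 + m := by
  intro m m' h
  have hfac : (m - m') * (2 * (m + m') + 1) = 0 := by linear_combination h
  rcases mul_eq_zero.mp hfac with h' | h' <;> omega

section QBinomial

variable {R : Type*} [CommRing R] (q : R)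

noncomputable def qBinomial : ℕ → ℕ → R
  | _, 0 => 1
  | 0, _ + 1 => 0
  | m + 1, j + 1 => qBinomial m j + q ^ (j + 1) * qBinomial m (j + 1)

@[simp]
theorem qBinomial_zero_right (m : ℕ) : qBinomial q m 0 = 1 := by cases m <;> rfl

theorem qBinomial_succ_succ (m j : ℕ) :
    qBinomial q (m + 1) (j + 1) = qBinomial q m j + q ^ (j + 1) * qBinomial q m (j + 1) := rfl

theorem qBinomial_eq_zero_of_lt : ∀ {m j : ℕ}, m < j → qBinomial q m j = 0
  | 0, _ + 1, _ => rfl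
  | m + 1, j + 1, h => by
    rw [qBinomial_succ_succ, qBinomial_eq_zero_of_lt (by omega),
      qBinomial_eq_zero_of_lt (by omega), mul_zero, add_zero]

@[simp]
theorem qBinomial_self : ∀ m : ℕ, qBinomial q m m = 1
  | 0 => rfl
  | m + 1 => by
    rw [qBinomial_succ_succ, qBinomial_self m, qBinomial_eq_zero_of_lt q (by omega), mul_zero,
      add_zero]

theorem qBinomial_succ_succ' : ∀ m j : ℕ,
    qBinomial q (m + 1) (j + 1) = q ^ (m - j) * qBinomial q m j + qBinomial q m (j + 1)
  | 0, 0 => by simp [qBinomial_eq_zero_of_lt]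
  | 0, j + 1 => by simp [qBinomial_eq_zero_of_lt]
  | m + 1, 0 => by
    have ih := qBinomial_succ_succ' m 0
    simp only [qBinomial_succ_succ, qBinomial_zero_right, Nat.sub_zero, zero_add, pow_one,
      mul_one] at ih ⊢
    linear_combination q * ih
  | m + 1, j + 1 => by
    have ih₁ := qBinomial_succ_succ' m j
    have ih₂ := qBinomial_succ_succ' m (j + 1)
    have hpow : q ^ (j + 2) * q ^ (m - (j + 1)) * qBinomial q m (j + 1) =
        q ^ (m - j) * q ^ (j + 1) * qBinomial q m (j + 1) := by
      rcases le_or_gt (j + 1) m with h | h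
      · rw [← pow_add, ← pow_add]; congr 2; omega
      · rw [qBinomial_eq_zero_of_lt q h, mul_zero, mul_zero]
    rw [qBinomial_succ_succ q (m + 1), Nat.add_sub_add_right]
    linear_combination ih₁ - q ^ (m - j) * qBinomial_succ_succ q m j + q ^ (j + 2) * ih₂ -
      qBinomial_succ_succ q m (j + 1) + hpow

theorem qBinomial_add_two_one (m : ℕ) :
    qBinomial q (m + 2) 1 = 1 + q ^ (m + 1) + q * qBinomial q m 1 := by
  rw [qBinomial_succ_succ, qBinomial_succ_succ' q m 0]
  simp only [qBinomial_zero_right, Nat.sub_zero]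
  ring

theorem qBinomial_add_two_add_two (m j : ℕ) :
    qBinomial q (m + 2) (j + 2) = (1 + q ^ (m + 1)) * qBinomial q m (j + 1) +
      q ^ (j + 2) * qBinomial q m (j + 2) + q ^ (m - j) * qBinomial q m j := by
  have hpow : q ^ (j + 2) * q ^ (m - (j + 1)) * qBinomial q m (j + 1) =
      q ^ (m + 1) * qBinomial q m (j + 1) := by
    rcases le_or_gt (j + 1) m with h | h
    · rw [← pow_add]; congr 2; omega
    · rw [qBinomial_eq_zero_of_lt q h, mul_zero, mul_zero]
  rw [qBinomial_succ_succ, qBinomial_succ_succ' q m j, qBinomial_succ_succ' q m (j + 1)]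
  linear_combination hpow

noncomputable def qPochhammer (n : ℕ) : R := ∏ l ∈ Icc 1 n, (1 - q ^ l)

@[simp]
theorem qPochhammer_zero : qPochhammer q 0 = 1 := by simp [qPochhammer]

theorem qPochhammer_succ (n : ℕ) : qPochhammer q (n + 1) = qPochhammer q n * (1 - q ^ (n + 1)) :=
  prod_Icc_succ_top (by omega) _

theorem qBinomial_mul_qPochhammer_mul_qPochhammer : ∀ {m j : ℕ}, j ≤ m →
    qBinomial q m j * (qPochhammer q j * qPochhammer q (m - j)) = qPochhammer q m
  | m, 0, _ => by simp
  | m + 1, j + 1, h => by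
    obtain rfl | hj := eq_or_lt_of_le (Nat.le_of_succ_le_succ h)
    · simp
    have ih₁ := qBinomial_mul_qPochhammer_mul_qPochhammer (m := m) (j := j) (by omega)
    have ih₂ := qBinomial_mul_qPochhammer_mul_qPochhammer (m := m) (j := j + 1) hj
    rw [show m - j = m - (j + 1) + 1 by omega, qPochhammer_succ q (m - (j + 1))] at ih₁
    rw [qPochhammer_succ q j] at ih₂
    have hpow : q ^ (j + 1) * q ^ (m - (j + 1) + 1) = q ^ (m + 1) := by
      rw [← pow_add]; congr 1; omega
    rw [Nat.add_sub_add_right, show m - j = m - (j + 1) + 1 by omega, qBinomial_succ_succ,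
      qPochhammer_succ q j, qPochhammer_succ q m, qPochhammer_succ q (m - (j + 1))]
    linear_combination (1 - q ^ (j + 1)) * ih₁ +
      q ^ (j + 1) * (1 - q ^ (m - (j + 1) + 1)) * ih₂ - qPochhammer q m * hpow

end QBinomial

section TripleProduct

open Polynomial

variable {R : Type*} [CommRing R] (q : R)

theorem pow_mul_pow_triangular_eq {a b : ℕ} {k l : ℤ}
    (h : 2 * (a : ℤ) + k * (k + 1) = 2 * b + l * (l + 1)) :
    q ^ a * q ^ triangular k = q ^ b * q ^ triangular l := by
  have hk := two_mul_natCast_triangular k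
  have hl := two_mul_natCast_triangular l
  rw [← pow_add, ← pow_add]
  congr 1
  omega

noncomputable def tripleProductCoeff (n i : ℕ) : R :=
  (-1) ^ (n + i) * qBinomial q (2 * n) i * q ^ triangular (i - n)

theorem tripleProductCoeff_eq_zero_of_lt {n i : ℕ} (h : 2 * n < i) :
    tripleProductCoeff q n i = 0 := by
  rw [tripleProductCoeff, qBinomial_eq_zero_of_lt q h, mul_zero, zero_mul]

theorem tripleProductCoeff_succ_zero (n : ℕ) :
    tripleProductCoeff q (n + 1) 0 = -q ^ n * tripleProductCoeff q n 0 := by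
  have hpow : q ^ 0 * q ^ triangular (-n - 1) = q ^ n * q ^ triangular (-n) :=
    pow_mul_pow_triangular_eq q (by ring)
  simp only [tripleProductCoeff, qBinomial_zero_right]
  rw [show ((0 : ℕ) : ℤ) - (n + 1 : ℕ) = -n - 1 by push_cast; ring,
    show ((0 : ℕ) : ℤ) - n = -n by simp]
  linear_combination -(-1) ^ n * hpow

theorem tripleProductCoeff_succ_one (n : ℕ) :
    tripleProductCoeff q (n + 1) 1 =
      (1 + q ^ (2 * n + 1)) * tripleProductCoeff q n 0 - q ^ n * tripleProductCoeff q n 1 := by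
  have hpow : q ^ n * q ^ triangular (1 - n) = q ^ 1 * q ^ triangular (-n) :=
    pow_mul_pow_triangular_eq q (by ring)
  have hQ := qBinomial_add_two_one q (2 * n)
  rw [show 2 * n + 2 = 2 * (n + 1) by ring] at hQ
  simp only [tripleProductCoeff, qBinomial_zero_right, hQ]
  rw [show ((1 : ℕ) : ℤ) - (n + 1 : ℕ) = -n by push_cast; ring,
    show ((0 : ℕ) : ℤ) - n = -n by simp, Nat.cast_one]
  linear_combination -(-1) ^ n * qBinomial q (2 * n) 1 * hpow

theorem tripleProductCoeff_succ_add_two (n j : ℕ) :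
    tripleProductCoeff q (n + 1) (j + 2) =
      (1 + q ^ (2 * n + 1)) * tripleProductCoeff q n (j + 1) -
        q ^ n * tripleProductCoeff q n (j + 2) - q ^ (n + 1) * tripleProductCoeff q n j := by
  obtain h | h := lt_or_ge (2 * n) j
  · simp only [tripleProductCoeff_eq_zero_of_lt q (show 2 * (n + 1) < j + 2 by omega),
      tripleProductCoeff_eq_zero_of_lt q (show 2 * n < j + 1 by omega),
      tripleProductCoeff_eq_zero_of_lt q (show 2 * n < j + 2 by omega),
      tripleProductCoeff_eq_zero_of_lt q h]
    ring
  set k : ℤ := j + 1 - n with hk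
  have hpow₁ : q ^ n * q ^ triangular (k + 1) = q ^ (j + 2) * q ^ triangular k :=
    pow_mul_pow_triangular_eq q (by rw [hk]; push_cast; ring)
  have hpow₂ : q ^ (n + 1) * q ^ triangular (k - 1) = q ^ (2 * n - j) * q ^ triangular k :=
    pow_mul_pow_triangular_eq q (by rw [hk]; push_cast [Nat.cast_sub h]; ring)
  have hQ := qBinomial_add_two_add_two q (2 * n) j
  rw [show 2 * n + 2 = 2 * (n + 1) by ring] at hQ
  simp only [tripleProductCoeff, hQ]
  rw [show ((j + 2 : ℕ) : ℤ) - (n + 1 : ℕ) = k by push_cast; ring,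
    show ((j + 1 : ℕ) : ℤ) - n = k by push_cast; ring,
    show ((j + 2 : ℕ) : ℤ) - n = k + 1 by push_cast; ring,
    show (j : ℤ) - n = k - 1 by ring]
  linear_combination (-1) ^ (n + j) * qBinomial q (2 * n) (j + 2) * hpow₁ +
    (-1) ^ (n + j) * qBinomial q (2 * n) j * hpow₂

noncomputable def finiteTripleProduct (n : ℕ) : R[X] :=
  ∏ j ∈ range n, (1 - C (q ^ (j + 1)) * X) * (X - C (q ^ j))

theorem finiteTripleProduct_succ (n : ℕ) :
    finiteTripleProduct q (n + 1) = finiteTripleProduct q n * C (-q ^ n) +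
      finiteTripleProduct q n * C (1 + q ^ (2 * n + 1)) * X ^ 1 -
        finiteTripleProduct q n * C (q ^ (n + 1)) * X ^ 2 := by
  rw [finiteTripleProduct, prod_range_succ, ← finiteTripleProduct]
  simp only [map_neg, map_add, map_one, map_pow]
  ring

theorem coeff_finiteTripleProduct : ∀ n i : ℕ,
    (finiteTripleProduct q n).coeff i = tripleProductCoeff q n i
  | 0, 0 => by simp [finiteTripleProduct, tripleProductCoeff, triangular]
  | 0, i + 1 => by
    rw [tripleProductCoeff_eq_zero_of_lt q (by omega)]
    simp [finiteTripleProduct, coeff_one]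
  | n + 1, i => by
    simp only [finiteTripleProduct_succ, coeff_add, coeff_sub, coeff_mul_C, coeff_mul_X_pow',
      coeff_finiteTripleProduct n]
    match i with
    | 0 => rw [if_neg (by omega), if_neg (by omega), tripleProductCoeff_succ_zero]; ring
    | 1 => rw [if_pos le_rfl, if_neg (by omega), Nat.sub_self, tripleProductCoeff_succ_one]; ring
    | j + 2 =>
      rw [if_pos (by omega), if_pos (by omega), Nat.add_sub_cancel,
        show j + 2 - 1 = j + 1 from rfl, tripleProductCoeff_succ_add_two]
      ring

theorem finiteTripleProduct_succ_eval_one (n : ℕ) :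
    (finiteTripleProduct q (n + 1)).eval 1 = 0 := by
  rw [finiteTripleProduct, prod_range_succ', eval_mul]
  simp

theorem derivative_finiteTripleProduct_succ_eval_one : ∀ n : ℕ,
    (derivative (finiteTripleProduct q (n + 1))).eval 1 = qPochhammer q (n + 1) * qPochhammer q n
  | 0 => by simp [finiteTripleProduct, qPochhammer]
  | n + 1 => by
    rw [finiteTripleProduct, prod_range_succ, ← finiteTripleProduct, derivative_mul,
      eval_add, eval_mul (p := finiteTripleProduct q (n + 1)), finiteTripleProduct_succ_eval_one,
      zero_mul, add_zero, eval_mul, derivative_finiteTripleProduct_succ_eval_one n,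
      qPochhammer_succ q (n + 1), qPochhammer_succ q n]
    simp only [eval_mul, eval_sub, eval_one, eval_C, eval_X, mul_one]
    ring

theorem sum_tripleProductCoeff_mul_natCast (n : ℕ) :
    ∑ i ∈ range (2 * n + 1), tripleProductCoeff q n i * i =
      (derivative (finiteTripleProduct q n)).eval 1 := by
  have hdeg : (finiteTripleProduct q n).natDegree < 2 * n + 1 := by
    rw [Nat.lt_succ_iff, natDegree_le_iff_coeff_eq_zero]
    intro i hi
    rw [coeff_finiteTripleProduct, tripleProductCoeff_eq_zero_of_lt q (by exact_mod_cast hi)]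
  rw [derivative_eval, sum_over_range' _ (by simp) _ hdeg]
  simp [coeff_finiteTripleProduct]

end TripleProduct

section PowerSeries

open PowerSeries

variable {R : Type*} [CommRing R]

theorem coeff_eq_of_X_pow_dvd_sub {c d : ℕ} {f g : R⟦X⟧} (h : X ^ c ∣ f - g) (hd : d < c) :
    coeff d f = coeff d g :=
  sub_eq_zero.mp (by simpa using X_pow_dvd_iff.mp h d hd)

theorem X_pow_dvd_qPochhammer_sub {c a b : ℕ} (ha : c ≤ a + 1) (hb : c ≤ b + 1) :
    (X : R⟦X⟧) ^ c ∣ qPochhammer X a - qPochhammer X b := by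
  wlog hab : a ≤ b generalizing a b with H
  · exact dvd_sub_comm.mp (H hb ha (by omega))
  induction b, hab using Nat.le_induction with
  | base => simp
  | succ b hab ih =>
    rw [qPochhammer_succ, show qPochhammer X a - qPochhammer X b * (1 - X ^ (b + 1)) =
      qPochhammer X a - qPochhammer X b + X ^ (b + 1) * qPochhammer (X : R⟦X⟧) b by ring]
    exact dvd_add (ih (by omega)) (dvd_mul_of_dvd_left (pow_dvd_pow _ (by omega)) _)

theorem isUnit_qPochhammer_X (n : ℕ) : IsUnit (qPochhammer (X : R⟦X⟧) n) :=
  isUnit_iff_constantCoeff.mpr <| by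
    simp +contextual [qPochhammer, map_prod, Nat.one_le_iff_ne_zero]

theorem X_pow_dvd_qBinomial_mul_qPochhammer_sub_one {c m j k : ℕ} (hjm : j ≤ m)
    (hj : c ≤ j + 1) (hmj : c ≤ m - j + 1) (hk : c ≤ k + 1) :
    (X : R⟦X⟧) ^ c ∣ qBinomial X m j * qPochhammer X k - 1 := by
  have hQ := qBinomial_mul_qPochhammer_mul_qPochhammer (X : R⟦X⟧) hjm
  rw [← ((isUnit_qPochhammer_X j).mul (isUnit_qPochhammer_X (m - j))).dvd_mul_right]
  have h : (qBinomial X m j * qPochhammer X k - 1) * (qPochhammer X j * qPochhammer X (m - j)) =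
      qPochhammer X k * qPochhammer X m - qPochhammer X j * qPochhammer (X : R⟦X⟧) (m - j) := by
    linear_combination qPochhammer X k * hQ
  rw [h]
  exact dvd_mul_sub_mul (X_pow_dvd_qPochhammer_sub hk hj)
    (X_pow_dvd_qPochhammer_sub (by omega) hmj)

theorem X_pow_dvd_tripleProductCoeff_mul_qPochhammer_sub {N M : ℕ} (hM : 2 * N + 1 ≤ M)
    (i : ℕ) : (X : R⟦X⟧) ^ (N + 1) ∣
      tripleProductCoeff X M i * qPochhammer X M - C ((-1) ^ (M + i)) * X ^ triangular (i - M) := by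
  have h : tripleProductCoeff (X : R⟦X⟧) M i * qPochhammer X M -
      C ((-1) ^ (M + i)) * X ^ triangular (i - M) =
      C ((-1) ^ (M + i)) * X ^ triangular (i - M) *
        (qBinomial X (2 * M) i * qPochhammer X M - 1) := by
    simp only [tripleProductCoeff, map_pow, map_neg, map_one]
    ring
  rw [h]
  rcases lt_or_ge N (triangular (i - M)) with hN | hN
  · exact dvd_mul_of_dvd_left (dvd_mul_of_dvd_right (pow_dvd_pow _ hN) _) _
  · obtain ⟨hlo, hhi⟩ := mem_Icc_of_triangular_le hN
    exact dvd_mul_of_dvd_right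
      (X_pow_dvd_qBinomial_mul_qPochhammer_sub_one (by omega) (by omega) (by omega) (by omega)) _

theorem X_pow_dvd_qPochhammer_pow_three_sub (N : ℕ) :
    (X : R⟦X⟧) ^ (N + 1) ∣ qPochhammer X (N + 1) ^ 3 -
      ∑ i ∈ range (2 * (2 * N + 1) + 1),
        C ((-1) ^ (2 * N + 1 + i) * (i : R)) * X ^ triangular (i - (2 * N + 1 : ℕ)) := by
  set M := 2 * N + 1
  have hE : (X : R⟦X⟧) ^ (N + 1) ∣ qPochhammer X (N + 1) ^ 3 -
      qPochhammer X M * (qPochhammer X M * qPochhammer X (2 * N)) := by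
    rw [pow_three]
    exact dvd_mul_sub_mul (X_pow_dvd_qPochhammer_sub (by omega) (by omega))
      (dvd_mul_sub_mul (X_pow_dvd_qPochhammer_sub (by omega) (by omega))
        (X_pow_dvd_qPochhammer_sub (by omega) (by omega)))
  have hsum : qPochhammer X M * (qPochhammer X M * qPochhammer X (2 * N)) =
      ∑ i ∈ range (2 * M + 1), tripleProductCoeff X M i * qPochhammer X M * (i : R⟦X⟧) := by
    rw [← derivative_finiteTripleProduct_succ_eval_one, ← sum_tripleProductCoeff_mul_natCast,
      mul_sum]
    exact sum_congr rfl fun i _ => by ring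
  have hterms : (X : R⟦X⟧) ^ (N + 1) ∣
      ∑ i ∈ range (2 * M + 1), tripleProductCoeff X M i * qPochhammer X M * (i : R⟦X⟧) -
        ∑ i ∈ range (2 * M + 1), C ((-1) ^ (M + i) * (i : R)) * X ^ triangular (i - M) := by
    rw [← sum_sub_distrib]
    refine dvd_sum fun i _ => ?_
    rw [map_mul, map_natCast, mul_right_comm _ (i : R⟦X⟧), ← sub_mul]
    exact dvd_mul_of_dvd_left (X_pow_dvd_tripleProductCoeff_mul_qPochhammer_sub le_rfl i) _
  rw [hsum] at hE
  simpa only [sub_add_sub_cancel] using dvd_add hE hterms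

end PowerSeries

theorem sum_range_ite_triangular_eq {N M : ℕ} (hM : 2 * N + 1 ≤ M) :
    ∑ i ∈ range (2 * M + 1),
        (if N = triangular (i - M) then (-1) ^ (M + i) * (i : ℤ) else 0) =
      ∑ m ∈ Icc (-(N : ℤ)) N, if 2 * m ^ 2 + m = (N : ℤ) then 4 * m + 1 else 0 := by
  by_cases hN : ∃ m : ℤ, 2 * m ^ 2 + m = N
  · obtain ⟨m, hm⟩ := hN
    have hmN : -(N : ℤ) ≤ m ∧ m ≤ N := by constructor <;> nlinarith
    have hRHS : ∑ m' ∈ Icc (-(N : ℤ)) N,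
        (if 2 * m' ^ 2 + m' = (N : ℤ) then 4 * m' + 1 else 0) = 4 * m + 1 := by
      rw [sum_eq_single_of_mem m (mem_Icc.mpr hmN), if_pos hm]
      exact fun m' _ hm' => if_neg fun h => hm' (two_mul_sq_add_self_injective (h.trans hm.symm))
    have hiff (i : ℕ) :
        N = triangular (i - M) ↔ (i : ℤ) = M + 2 * m ∨ (i : ℤ) = M - 2 * m - 1 := by
      rw [← Nat.cast_inj (R := ℤ), eq_comm, ← hm, natCast_triangular_eq_iff]
      omega
    set i₀ := (M + 2 * m).toNat
    set i₁ := (M - 2 * m - 1).toNat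
    have hsign₀ : (-1 : ℤ) ^ (M + i₀) = 1 := Even.neg_one_pow ⟨(M + m).toNat, by omega⟩
    have hsign₁ : (-1 : ℤ) ^ (M + i₁) = -1 :=
      Odd.neg_one_pow ⟨(M - m - 1).toNat, by omega⟩
    rw [hRHS, sum_eq_add_of_mem i₀ i₁ (mem_range.mpr (by omega)) (mem_range.mpr (by omega))
        (by omega) fun i _ hi => if_neg fun h => by rcases (hiff i).mp h with h | h <;> omega,
      if_pos ((hiff i₀).mpr (Or.inl (by omega))), if_pos ((hiff i₁).mpr (Or.inr (by omega))),
      hsign₀, hsign₁]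
    omega
  · push Not at hN
    rw [sum_eq_zero fun m _ => if_neg (hN m), sum_eq_zero fun i _ => if_neg fun h => ?_]
    obtain ⟨m, hm⟩ := exists_natCast_triangular_eq (i - M)
    exact hN m (by rw [← hm, ← h])

/-- Dividing by `q^(3/8)` (note `(4m+1)²/8 - 3/8 = 2m² + m`), the identity is compared
coefficientwise; the `N`-th coefficient of `∏_{n ≥ 1} (1 - q^n)³` is already that of the
product up to `N + 1`. -/
theorem euler_eta_cubed_identity (N : ℕ) :
    (PowerSeries.coeff (R := ℤ) N) (∏ n ∈ Finset.Icc 1 (N + 1), (1 - PowerSeries.X ^ n) ^ 3) =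
      ∑ m ∈ Finset.Icc (-(N : ℤ)) (N : ℤ), if 2 * m ^ 2 + m = (N : ℤ) then 4 * m + 1 else 0 := by
  rw [prod_pow, ← qPochhammer,
    coeff_eq_of_X_pow_dvd_sub (X_pow_dvd_qPochhammer_pow_three_sub N) N.lt_succ_self, map_sum]
  simp only [PowerSeries.coeff_C_mul_X_pow]
  exact sum_range_ite_triangular_eq le_rfl
end

section
/- For n a positive integer, define c(n) = Σ_{d|n} φ(gcd(d, n/d)) and i(n) = n·∏_{p|n}(1+1/p). Then i(n)/24 - c(n)/2 → ∞ as n → ∞; in particular, for all sufficiently large n, i(n) > 12·c(n). -/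
/-!
Always `i(n) ≥ n`, so it suffices that `c(n) = o(n)`. Group the divisors `d` of `n` by
`e = gcd(d, n/d)`. Since `e² ∣ n`, the class of `e` injects into the divisors of `n/e²`
via `d ↦ d/e`, so it has at most `2√(n/e²)` elements, each contributing `φ(e) ≤ e`:
at most `2√n` per class. The possible `e` are the divisors of the largest `e₀` with
`e₀² ∣ n`, and there are at most `2√e₀ ≤ 2n^{1/4}` of them. Hence `c(n) ≤ 4n^{3/4}`.
-/

open Filter

/-- `i(n) = n·∏_{p|n}(1 + 1/p)`, the index of `Γ₀(n)` in `SL₂(ℤ)`. -/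
noncomputable def gammaIndex (n : ℕ) : ℚ := n * ∏ p ∈ n.primeFactors, (1 + 1 / (p : ℚ))

/-- `c(n) = Σ_{d|n} φ(gcd(d, n/d))`, the number of cusps of `Γ₀(n)`. -/
def cuspCount (n : ℕ) : ℕ := ∑ d ∈ n.divisors, Nat.totient (Nat.gcd d (n / d))

open Finset

namespace Nat

theorem card_divisors_le_two_mul_sqrt (n : ℕ) : #n.divisors ≤ 2 * n.sqrt := by
  have hsub : n.divisors ⊆ Icc 1 n.sqrt ∪ (Icc 1 n.sqrt).image (n / ·) := by
    intro d hd
    obtain ⟨hdvd, hn⟩ := mem_divisors.mp hd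
    have hd0 : 0 < d := pos_of_mem_divisors hd
    simp only [mem_union, mem_image, mem_Icc]
    by_cases hsmall : d * d ≤ n
    · exact Or.inl ⟨hd0, le_sqrt.mpr hsmall⟩
    · have hcomp : n / d * d = n := Nat.div_mul_cancel hdvd
      have hpos : 0 < n / d := div_pos (le_of_dvd (pos_of_ne_zero hn) hdvd) hd0
      exact Or.inr ⟨n / d, ⟨hpos, le_sqrt.mpr (by nlinarith)⟩, Nat.div_div_self hdvd hn⟩
  calc #n.divisors ≤ #(Icc 1 n.sqrt) + #((Icc 1 n.sqrt).image (n / ·)) :=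
        (card_le_card hsub).trans (card_union_le _ _)
    _ ≤ #(Icc 1 n.sqrt) + #(Icc 1 n.sqrt) := Nat.add_le_add_left Finset.card_image_le _
    _ = 2 * n.sqrt := by rw [card_Icc, add_tsub_cancel_right, two_mul]

theorem sqrt_div_sq_mul_le (n e : ℕ) : sqrt (n / e ^ 2) * e ≤ sqrt n := by
  rw [le_sqrt]
  calc sqrt (n / e ^ 2) * e * (sqrt (n / e ^ 2) * e)
        = sqrt (n / e ^ 2) * sqrt (n / e ^ 2) * e ^ 2 := by ring
    _ ≤ n / e ^ 2 * e ^ 2 := Nat.mul_le_mul_right _ (sqrt_le _)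
    _ ≤ n := div_mul_le_self _ _

/-- The largest `e` with `e ^ 2 ∣ n` (for `n ≠ 0`). -/
noncomputable def sqFactor (n : ℕ) : ℕ :=
  (n.factorization.mapRange (· / 2) (Nat.zero_div 2)).prod (· ^ ·)

theorem factorization_sqFactor (n : ℕ) :
    (sqFactor n).factorization = n.factorization.mapRange (· / 2) (Nat.zero_div 2) :=
  prod_pow_factorization_eq_self fun _ hp =>
    prime_of_mem_primeFactors (Finsupp.support_mapRange hp)

theorem sqFactor_ne_zero (n : ℕ) : sqFactor n ≠ 0 := by
  rw [sqFactor, Finsupp.prod]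
  exact prod_ne_zero_iff.mpr fun _ hp =>
    pow_ne_zero _ (prime_of_mem_primeFactors (Finsupp.support_mapRange hp)).ne_zero

theorem dvd_sqFactor_iff {n e : ℕ} (hn : n ≠ 0) : e ∣ sqFactor n ↔ e ^ 2 ∣ n := by
  rcases eq_or_ne e 0 with rfl | he
  · simp [hn, sqFactor_ne_zero]
  rw [← factorization_le_iff_dvd he (sqFactor_ne_zero n),
    ← factorization_le_iff_dvd (pow_ne_zero 2 he) hn, factorization_sqFactor,
    factorization_pow, Finsupp.le_def, Finsupp.le_def]
  simp only [Finsupp.mapRange_apply, Finsupp.smul_apply, smul_eq_mul]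
  exact forall_congr' fun _ => (Nat.le_div_iff_mul_le two_pos).trans (by rw [mul_comm])

theorem sqFactor_le_sqrt {n : ℕ} (hn : n ≠ 0) : sqFactor n ≤ sqrt n :=
  le_sqrt'.mpr (le_of_dvd (pos_of_ne_zero hn) ((dvd_sqFactor_iff hn).mp dvd_rfl))

theorem gcd_div_sq_dvd {n d : ℕ} (hd : d ∣ n) : d.gcd (n / d) ^ 2 ∣ n := by
  simpa [sq, Nat.mul_div_cancel' hd] using
    Nat.mul_dvd_mul (gcd_dvd_left d (n / d)) (gcd_dvd_right d (n / d))

theorem card_filter_gcd_div_eq_le (n e : ℕ) :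
    #{d ∈ n.divisors | d.gcd (n / d) = e} ≤ #(n / e ^ 2).divisors := by
  refine card_le_card_of_injOn (· / e) ?_ ?_
  · intro d hd
    simp only [coe_filter, mem_divisors, Set.mem_ofPred_eq] at hd
    obtain ⟨⟨hdvd, hn⟩, rfl⟩ := hd
    set g := d.gcd (n / d)
    have hg : 0 < g := gcd_pos_of_pos_left _ (pos_of_dvd_of_pos hdvd (pos_of_ne_zero hn))
    obtain ⟨a, ha⟩ : g ∣ d := gcd_dvd_left d (n / d)
    obtain ⟨b, hb⟩ : g ∣ n / d := gcd_dvd_right d (n / d)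
    have hn' : n = g ^ 2 * (a * b) := by
      rw [← Nat.mul_div_cancel' hdvd, hb, ha]
      ring
    dsimp only
    rw [mem_coe, mem_divisors, hn', Nat.mul_div_cancel_left _ (pow_pos hg 2), ha,
      Nat.mul_div_cancel_left _ hg]
    exact ⟨dvd_mul_right a b, fun hab => hn (by rw [hn', hab, mul_zero])⟩
  · intro d₁ hd₁ d₂ hd₂ h
    simp only [coe_filter, Set.mem_ofPred_eq] at hd₁ hd₂
    exact (Nat.div_left_inj (hd₁.2 ▸ gcd_dvd_left _ _) (hd₂.2 ▸ gcd_dvd_left _ _)).mp h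

end Nat

open Nat

theorem sum_totient_gcd_div_filter_eq_le (n e : ℕ) :
    ∑ d ∈ n.divisors with d.gcd (n / d) = e, φ (d.gcd (n / d)) ≤ 2 * sqrt n := by
  calc ∑ d ∈ n.divisors with d.gcd (n / d) = e, φ (d.gcd (n / d))
      ≤ #{d ∈ n.divisors | d.gcd (n / d) = e} • e :=
        sum_le_card_nsmul _ _ _ fun d hd => (mem_filter.mp hd).2 ▸ totient_le _
    _ ≤ 2 * sqrt (n / e ^ 2) * e :=
        Nat.mul_le_mul_right e
          ((card_filter_gcd_div_eq_le n e).trans (card_divisors_le_two_mul_sqrt _))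
    _ ≤ 2 * sqrt n := by
        rw [mul_assoc]
        exact Nat.mul_le_mul_left 2 (sqrt_div_sq_mul_le n e)

theorem cuspCount_le (n : ℕ) : cuspCount n ≤ 4 * sqrt n * sqrt (sqrt n) := by
  rcases eq_or_ne n 0 with rfl | hn
  · simp [cuspCount]
  have hmaps : ∀ d ∈ n.divisors, d.gcd (n / d) ∈ (sqFactor n).divisors := fun d hd =>
    mem_divisors.mpr ⟨(dvd_sqFactor_iff hn).mpr (gcd_div_sq_dvd (dvd_of_mem_divisors hd)),
      sqFactor_ne_zero n⟩
  calc cuspCount n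
      = ∑ e ∈ (sqFactor n).divisors, ∑ d ∈ n.divisors with d.gcd (n / d) = e,
          φ (d.gcd (n / d)) := (sum_fiberwise_of_maps_to hmaps _).symm
    _ ≤ #(sqFactor n).divisors • (2 * sqrt n) :=
        sum_le_card_nsmul _ _ _ fun e _ => sum_totient_gcd_div_filter_eq_le n e
    _ ≤ 2 * sqrt (sqrt n) * (2 * sqrt n) :=
        Nat.mul_le_mul_right _ ((card_divisors_le_two_mul_sqrt _).trans
          (Nat.mul_le_mul_left 2 (sqrt_le_sqrt (sqFactor_le_sqrt hn))))
    _ = 4 * sqrt n * sqrt (sqrt n) := by ring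

theorem twentyFour_mul_cuspCount_le {n : ℕ} (hn : 96 ^ 4 ≤ n) : 24 * cuspCount n ≤ n := by
  set a := sqrt n
  set b := sqrt a
  have hb : 96 ≤ b := le_sqrt.mpr (le_sqrt.mpr (by omega))
  calc 24 * cuspCount n ≤ 96 * a * b := by linarith [cuspCount_le n]
    _ ≤ b * a * b := Nat.mul_le_mul_right _ (Nat.mul_le_mul_right _ hb)
    _ = a * (b * b) := by ring
    _ ≤ a * a := Nat.mul_le_mul_left _ (sqrt_le a)
    _ ≤ n := sqrt_le n

theorem natCast_le_gammaIndex (n : ℕ) : (n : ℚ) ≤ gammaIndex n :=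
  le_mul_of_one_le_right n.cast_nonneg
    (one_le_prod fun _ _ => le_add_of_nonneg_right (by positivity))

theorem index_over_24_sub_cusps_over_2_tendsto_atTop :
    Tendsto (fun n : ℕ => gammaIndex n / 24 - (cuspCount n : ℚ) / 2) atTop atTop ∧
    ∀ᶠ n : ℕ in atTop, 12 * (cuspCount n : ℚ) < gammaIndex n := by
  have hcusp : ∀ᶠ n : ℕ in atTop, 24 * (cuspCount n : ℚ) ≤ n :=
    (eventually_ge_atTop _).mono fun n hn => by exact_mod_cast twentyFour_mul_cuspCount_le hn
  constructor
  · refine tendsto_atTop_mono' atTop ?_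
      (tendsto_natCast_atTop_atTop.atTop_div_const (by norm_num : (0 : ℚ) < 48))
    filter_upwards [hcusp] with n hn
    linarith [natCast_le_gammaIndex n]
  · filter_upwards [hcusp, eventually_gt_atTop 0] with n hn hpos
    have : (0 : ℚ) < n := by exact_mod_cast hpos
    linarith [natCast_le_gammaIndex n]
end

section
/- For k ≥ 3 and distinct primes p₁ < p₂ < ... < p_k, if (1/24)·∏_{i=1}^k (p_i + 1) − 2^{k−1} ≤ 1 then k = 3 and p₁p₂p₃ ∈ {30, 42}. -/
def mppbG : ℕ → ℕ := fun i => if i = 0 then 3 else if i = 1 then 4 else i + 4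

lemma mppbG_grow : ∀ k, 4 ≤ k → 24 + 12 * 2 ^ k < ∏ i ∈ Finset.range k, mppbG i := by
  intro k hk
  induction k, hk using Nat.le_induction with
  | base => decide
  | succ n hn ih =>
    rw [Finset.prod_range_succ]
    have hg : 8 ≤ mppbG n := by
      unfold mppbG
      split_ifs <;> omega
    calc 24 + 12 * 2 ^ (n + 1) ≤ (24 + 12 * 2 ^ n) * 2 := by
            rw [pow_succ]; ring_nf; omega
      _ < (∏ i ∈ Finset.range n, mppbG i) * 2 := by omega
      _ ≤ (∏ i ∈ Finset.range n, mppbG i) * mppbG n :=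
            Nat.mul_le_mul_left _ (by omega)

theorem many_prime_product_bound (k : ℕ) (hk : 3 ≤ k) (p : Fin k → ℕ)
    (hp : ∀ i, (p i).Prime) (hmono : StrictMono p)
    (hbound : (1 / 24 : ℚ) * ∏ i, ((p i : ℚ) + 1) - 2 ^ (k - 1) ≤ 1) :
    k = 3 ∧ (∏ i, p i) ∈ ({30, 42} : Finset ℕ) := by
  set P : ℕ := ∏ i, (p i + 1) with hP
  have hcast : (P : ℚ) = ∏ i, ((p i : ℚ) + 1) := by
    rw [hP]; push_cast; rfl
  have hPle : P ≤ 24 + 24 * 2 ^ (k - 1) := by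
    have h1 : (P : ℚ) ≤ 24 * (1 + 2 ^ (k - 1)) := by
      rw [hcast]; linarith
    have h2 : ((24 + 24 * 2 ^ (k - 1) : ℕ) : ℚ) = 24 * (1 + 2 ^ (k - 1)) := by
      push_cast; ring
    rw [← h2] at h1
    exact_mod_cast h1
  -- lower bounds on p
  have hlow : ∀ m (h : m < k), m + 2 ≤ p ⟨m, h⟩ := by
    intro m
    induction m with
    | zero => intro h; exact (hp _).two_le
    | succ n ih =>
      intro h
      have hn : n < k := lt_trans (Nat.lt_succ_self n) h
      have h1 := hmono (show (⟨n, hn⟩ : Fin k) < ⟨n+1, h⟩ by simp [Fin.lt_def])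
      have h2 := ih hn
      omega
  have h2lt : (2:ℕ) < k := by omega
  have hp2 : 5 ≤ p ⟨2, h2lt⟩ := by
    have h4 := hlow 2 h2lt
    have hpr := hp ⟨2, h2lt⟩
    rcases Nat.lt_or_ge (p ⟨2, h2lt⟩) 5 with h | h
    · have he : p ⟨2, h2lt⟩ = 4 := by omega
      rw [he] at hpr
      norm_num at hpr
    · exact h
  have hlow2 : ∀ m (h : m < k), 2 ≤ m → m + 3 ≤ p ⟨m, h⟩ := by
    intro m
    induction m with
    | zero => intro h h2; omega
    | succ n ih =>
      intro h h2
      rcases Nat.lt_or_ge n 2 with hn | hn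
      · have : n = 1 := by omega
        subst this
        exact hp2
      · have hnk : n < k := lt_trans (Nat.lt_succ_self n) h
        have h1 := ih hnk hn
        have h3 := hmono (show (⟨n, hnk⟩ : Fin k) < ⟨n+1, h⟩ by simp [Fin.lt_def])
        omega
  have hk3 : k = 3 := by
    by_contra hne
    have hk4 : 4 ≤ k := by omega
    have hFP : ∏ i ∈ Finset.range k, mppbG i ≤ P := by
      rw [hP, ← Fin.prod_univ_eq_prod_range (fun i => mppbG i) k]
      refine Finset.prod_le_prod' fun i _ => ?_
      have h := hlow i.val i.isLt
      simp only [Fin.eta] at h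
      rcases Nat.lt_or_ge i.val 2 with hc | hc
      · unfold mppbG; split_ifs <;> omega
      · have h' := hlow2 i.val i.isLt hc
        simp only [Fin.eta] at h'
        unfold mppbG; split_ifs <;> omega
    have hgrow := mppbG_grow k hk4
    have hk1 : k - 1 + 1 = k := by omega
    have hpow : (2:ℕ) ^ k = 2 ^ (k-1) * 2 := by rw [← pow_succ, hk1]
    rw [hpow] at hgrow
    omega
  subst hk3
  have hP120 : P ≤ 120 := by norm_num at hPle; omega
  have hab : p 0 < p 1 := hmono (by decide : (0 : Fin 3) < 1)
  have hbc : p 1 < p 2 := hmono (by decide : (1 : Fin 3) < 2)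
  have hPv : P = (p 0 + 1) * (p 1 + 1) * (p 2 + 1) := by
    rw [hP, Fin.prod_univ_three]
  have hpa := hp 0
  have hpb := hp 1
  have hpc := hp 2
  have ha2 : 2 ≤ p 0 := hpa.two_le
  have hb3 : 3 ≤ p 1 := by omega
  have hc4 : 4 ≤ p 2 := by omega
  have h1 : (p 0 + 1) * (p 1 + 1) * (p 2 + 1) ≤ 120 := hPv ▸ hP120
  have h3 : 3 ≤ p 0 + 1 := by omega
  have h4 : 4 ≤ p 1 + 1 := by omega
  have hc9 : p 2 ≤ 9 := by
    have h12 : 3 * 4 * (p 2 + 1) ≤ (p 0 + 1) * (p 1 + 1) * (p 2 + 1) :=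
      Nat.mul_le_mul_right _ (Nat.mul_le_mul h3 h4)
    omega
  have hb4 : p 1 ≤ 4 := by
    have h5 : p 1 + 2 ≤ p 2 + 1 := by omega
    have h12 : 3 * (p 1 + 1) * (p 1 + 2) ≤ (p 0 + 1) * (p 1 + 1) * (p 2 + 1) :=
      Nat.mul_le_mul (Nat.mul_le_mul h3 (le_refl (p 1 + 1))) h5
    nlinarith [h12, h1]
  have ha3 : p 0 ≤ 3 := by omega
  refine ⟨rfl, ?_⟩
  rw [Fin.prod_univ_three]
  simp only [Finset.mem_insert, Finset.mem_singleton]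
  interval_cases h₀ : p 0 <;> interval_cases h₁ : p 1 <;> interval_cases h₂ : p 2 <;>
    revert hpa hpb hpc h1 <;> simp_all <;> decide
end
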